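/- arXiv:1702.00477 — 2 statements merged into one kernel-verified Lean document; each statement's English description precedes it below -/
import Mathlib

section
/- Triangle-type inequality for the dominance move: for finite nonempty sets A, B, C ⊂ R^m, D(A,B) + D(B,C) ≥ D(A, B ∪ C), and also D(A,B) + D(A,C) ≥ D(A, B ∪ C). -/
open Finset

/-- A point in `ℝ^m`. -/
abbrev Pt (m : ℕ) := Fin m → ℝ

/-- `p` weakly dominates `q` (minimization): componentwise `≤`. -/
def wdom {m : ℕ} (p q : Pt m) : Prop := ∀ i, p i ≤ q i

/-- `p` dominates `q`: componentwise `≤` with at least one strict inequality. -/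
def sdom {m : ℕ} (p q : Pt m) : Prop := wdom p q ∧ ∃ i, p i < q i

/-- Set `P` weakly dominates set `Q`: every `q ∈ Q` is weakly dominated by some `p ∈ P`. -/
def setWDom {m : ℕ} (P Q : Finset (Pt m)) : Prop := ∀ q ∈ Q, ∃ p ∈ P, wdom p q

/-- L1 (Manhattan) distance between points. -/
noncomputable def l1 {m : ℕ} (p q : Pt m) : ℝ := ∑ j, |p j - q j|

/-- The dominance move `D(P,Q)`: the minimum total L1 move distance of points of `P`
(each `p` moved to `f p`) so that the moved set weakly dominates `Q`. -/
noncomputable def DoM {m : ℕ} (P Q : Finset (Pt m)) : ℝ :=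
  sInf { c | ∃ f : Pt m → Pt m, setWDom (P.image f) Q ∧ c = ∑ p ∈ P, l1 p (f p) }

/-- `d(p, S)`: the minimum L1 move of `p` needed to weakly dominate all of `S`,
namely `Σ_j (p^j − min({p^j} ∪ {s^j : s ∈ S}))`. -/
noncomputable def dCost {m : ℕ} (p : Pt m) (S : Finset (Pt m)) : ℝ :=
  ∑ j, (p j - (insert p S).inf' (insert_nonempty p S) (fun s => s j))

/-- `d(a, b)` between two points: `Σ_j (a^j − min(a^j, b^j))`. -/
noncomputable def dpt {m : ℕ} (a b : Pt m) : ℝ := ∑ j, (a j - min (a j) (b j))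

/-- `b` is an inward neighbor of `q` in `R`: `b ∈ R \ {q}` minimizes `d(·, q)`. -/
def isNb {m : ℕ} (R : Finset (Pt m)) (q b : Pt m) : Prop :=
  b ∈ R.erase q ∧ ∀ r ∈ R.erase q, dpt b q ≤ dpt r q

/-- The union of the point-sets of a list of groups. -/
noncomputable def unionSnd {m : ℕ} (S : List (Pt m × Finset (Pt m))) : Finset (Pt m) :=
  S.foldr (fun g acc => g.2 ∪ acc) ∅

/-- `S` is a partition of `P` to `Q`: each group is a point of `P` together with
a subset of `Q`, and the subsets cover `Q`. -/
def IsPartition {m : ℕ} (P Q : Finset (Pt m)) (S : List (Pt m × Finset (Pt m))) : Prop :=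
  (∀ g ∈ S, g.1 ∈ P ∧ g.2 ⊆ Q) ∧ unionSnd S = Q

/-- Total cost of a partition: the sum of the group costs `d(p_s, Q_s)`. -/
noncomputable def pcost {m : ℕ} (S : List (Pt m × Finset (Pt m))) : ℝ :=
  (S.map (fun g => dCost g.1 g.2)).sum

/-!
Given a move `f` of `A` whose image dominates `B` and a move `g` of `B` whose image dominates
`C`, assign to each `b ∈ B` a point `σ b ∈ A` with `f (σ b) ≤ b`, and move each `a ∈ A` to the
componentwise minimum of `f a` and of the targets `g b` of the points `b` assigned to it. The
result dominates `B ∪ C`, and in each coordinate where the minimum is some `g b`, the extra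
distance travelled by `a` beyond `f a` is at most `b - g b`, because `f a ≤ b`. For the second
inequality, move each `a` to the componentwise minimum of its two targets. Passing to infima
gives both inequalities.
-/

section

variable {m : ℕ}

theorem wdom_iff_le {p q : Pt m} : wdom p q ↔ p ≤ q := Iff.rfl

theorem setWDom_image_iff {P Q : Finset (Pt m)} {f : Pt m → Pt m} :
    setWDom (P.image f) Q ↔ ∀ q ∈ Q, ∃ p ∈ P, f p ≤ q := by
  simp only [setWDom, exists_mem_image, wdom_iff_le]

theorem setWDom_union_iff {P Q₁ Q₂ : Finset (Pt m)} :
    setWDom P (Q₁ ∪ Q₂) ↔ setWDom P Q₁ ∧ setWDom P Q₂ :=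
  forall_mem_union

theorem setWDom_image_of_le {P Q : Finset (Pt m)} {f g : Pt m → Pt m}
    (hgf : ∀ p ∈ P, g p ≤ f p) (hf : setWDom (P.image f) Q) : setWDom (P.image g) Q := by
  rw [setWDom_image_iff] at hf ⊢
  intro q hq
  obtain ⟨p, hp, hpq⟩ := hf q hq
  exact ⟨p, hp, (hgf p hp).trans hpq⟩

theorem exists_setWDom_image {P : Finset (Pt m)} (hP : P.Nonempty) (Q : Finset (Pt m)) :
    ∃ f : Pt m → Pt m, setWDom (P.image f) Q := by
  obtain ⟨q₀, hq₀⟩ := Q.bddBelow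
  obtain ⟨p, hp⟩ := hP
  exact ⟨fun _ => q₀, setWDom_image_iff.2 fun q hq => ⟨p, hp, hq₀ hq⟩⟩

theorem l1_nonneg (p q : Pt m) : 0 ≤ l1 p q :=
  sum_nonneg fun _ _ => abs_nonneg _

theorem l1_inf_le (a u v : Pt m) : l1 a (u ⊓ v) ≤ l1 a u + l1 a v := by
  rw [l1, l1, l1, ← sum_add_distrib]
  refine sum_le_sum fun j _ => ?_
  show |a j - min (u j) (v j)| ≤ _
  rcases min_choice (u j) (v j) with h | h <;>
    simp only [h, le_add_iff_nonneg_left, le_add_iff_nonneg_right, abs_nonneg]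

theorem l1_inf'_insert_le {ι : Type*} (a u : Pt m) (s : Finset ι)
    (b c : ι → Pt m) (hub : ∀ i ∈ s, u ≤ b i) :
    l1 a ((insert u (s.image c)).inf' (insert_nonempty _ _) id) ≤
      l1 a u + ∑ i ∈ s, l1 (b i) (c i) := by
  simp only [l1]
  rw [sum_comm, ← sum_add_distrib]
  refine sum_le_sum fun j _ => ?_
  set x := (insert u (s.image c)).inf' (insert_nonempty _ _) id
  have hxu : x j ≤ u j := (inf'_le id (mem_insert_self u (s.image c)) : x ≤ u) j
  obtain ⟨y, hy, hxy⟩ := exists_mem_eq_inf' (insert_nonempty u (s.image c)) (· j)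
  replace hxy : x j = y j := (Finset.inf'_apply _ _ j).trans hxy
  rcases mem_insert.1 hy with rfl | hy
  · have hsum : 0 ≤ ∑ i ∈ s, |b i j - c i j| := sum_nonneg fun _ _ => abs_nonneg _
    rw [hxy]
    linarith
  obtain ⟨i, hi, rfl⟩ := mem_image.1 hy
  calc |a j - x j| ≤ |a j - u j| + |u j - x j| := abs_sub_le _ _ _
    _ ≤ |a j - u j| + |b i j - c i j| := by
        rw [abs_of_nonneg (sub_nonneg.2 hxu)]
        have := hub i hi j
        have := le_abs_self (b i j - c i j)
        linarith
    _ ≤ |a j - u j| + ∑ i ∈ s, |b i j - c i j| := by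
        gcongr
        exact single_le_sum (f := fun i => |b i j - c i j|) (fun _ _ => abs_nonneg _) hi

theorem exists_setWDom_union_trans {A B C : Finset (Pt m)}
    {f g : Pt m → Pt m} (hf : setWDom (A.image f) B) (hg : setWDom (B.image g) C) :
    ∃ h : Pt m → Pt m, setWDom (A.image h) (B ∪ C) ∧
      ∑ a ∈ A, l1 a (h a) ≤ ∑ a ∈ A, l1 a (f a) + ∑ b ∈ B, l1 b (g b) := by
  rw [setWDom_image_iff] at hf hg
  choose! σ hσA hσ using hf
  let h a := (insert (f a) ((B.filter (σ · = a)).image g)).inf' (insert_nonempty _ _) id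
  have hhf : ∀ a, h a ≤ f a := fun a => inf'_le id (mem_insert_self _ _)
  have hhg : ∀ b ∈ B, h (σ b) ≤ g b := fun b hb => by
    have hb' : b ∈ B.filter (σ · = σ b) := mem_filter.2 ⟨hb, rfl⟩
    exact inf'_le id (mem_insert_of_mem (mem_image_of_mem g hb'))
  refine ⟨h, setWDom_union_iff.2 ⟨?_, ?_⟩, ?_⟩
  · exact setWDom_image_of_le (fun a _ => hhf a)
      (setWDom_image_iff.2 fun b hb => ⟨σ b, hσA b hb, hσ b hb⟩)
  · refine setWDom_image_iff.2 fun q hq => ?_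
    obtain ⟨b, hb, hbq⟩ := hg q hq
    exact ⟨σ b, hσA b hb, (hhg b hb).trans hbq⟩
  · calc ∑ a ∈ A, l1 a (h a)
        ≤ ∑ a ∈ A, (l1 a (f a) + ∑ b ∈ B with σ b = a, l1 b (g b)) := by
          refine sum_le_sum fun a _ => l1_inf'_insert_le a (f a) _ id g fun b hb => ?_
          obtain ⟨hbB, rfl⟩ := mem_filter.1 hb
          exact hσ b hbB
      _ = ∑ a ∈ A, l1 a (f a) + ∑ b ∈ B, l1 b (g b) := by
          rw [sum_add_distrib, sum_fiberwise_of_maps_to hσA]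

theorem exists_setWDom_union_inf {A B C : Finset (Pt m)}
    {f g : Pt m → Pt m} (hf : setWDom (A.image f) B) (hg : setWDom (A.image g) C) :
    ∃ h : Pt m → Pt m, setWDom (A.image h) (B ∪ C) ∧
      ∑ a ∈ A, l1 a (h a) ≤ ∑ a ∈ A, l1 a (f a) + ∑ a ∈ A, l1 a (g a) :=
  ⟨f ⊓ g, setWDom_union_iff.2 ⟨setWDom_image_of_le (fun _ _ => inf_le_left) hf,
      setWDom_image_of_le (fun _ _ => inf_le_right) hg⟩,
    by rw [← sum_add_distrib]; exact sum_le_sum fun a _ => l1_inf_le a (f a) (g a)⟩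

def moveCosts (P Q : Finset (Pt m)) : Set ℝ :=
  { c | ∃ f : Pt m → Pt m, setWDom (P.image f) Q ∧ c = ∑ p ∈ P, l1 p (f p) }

theorem DoM_eq_sInf_moveCosts (P Q : Finset (Pt m)) : DoM P Q = sInf (moveCosts P Q) := rfl

theorem bddBelow_moveCosts (P Q : Finset (Pt m)) : BddBelow (moveCosts P Q) := by
  refine ⟨0, ?_⟩
  rintro _ ⟨f, -, rfl⟩
  exact sum_nonneg fun p _ => l1_nonneg p (f p)

theorem moveCosts_nonempty {P : Finset (Pt m)} (hP : P.Nonempty) (Q : Finset (Pt m)) :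
    (moveCosts P Q).Nonempty :=
  let ⟨f, hf⟩ := exists_setWDom_image hP Q
  ⟨_, f, hf, rfl⟩

theorem DoM_le {P Q : Finset (Pt m)} {f : Pt m → Pt m} (hf : setWDom (P.image f) Q) :
    DoM P Q ≤ ∑ p ∈ P, l1 p (f p) :=
  csInf_le (bddBelow_moveCosts P Q) ⟨f, hf, rfl⟩

theorem DoM_nonneg (P Q : Finset (Pt m)) : 0 ≤ DoM P Q :=
  Real.sInf_nonneg <| by
    rintro _ ⟨f, -, rfl⟩
    exact sum_nonneg fun p _ => l1_nonneg p (f p)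

@[simp]
theorem DoM_empty_left (Q : Finset (Pt m)) : DoM ∅ Q = 0 :=
  le_antisymm (Real.sInf_nonpos <| by rintro _ ⟨f, -, rfl⟩; simp) (DoM_nonneg ∅ Q)

theorem DoM_le_add {P Q P₁ Q₁ P₂ Q₂ : Finset (Pt m)} (hP₁ : P₁.Nonempty) (hP₂ : P₂.Nonempty)
    (H : ∀ f g : Pt m → Pt m, setWDom (P₁.image f) Q₁ → setWDom (P₂.image g) Q₂ →
      ∃ h : Pt m → Pt m, setWDom (P.image h) Q ∧
        ∑ p ∈ P, l1 p (h p) ≤ ∑ p ∈ P₁, l1 p (f p) + ∑ p ∈ P₂, l1 p (g p)) :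
    DoM P Q ≤ DoM P₁ Q₁ + DoM P₂ Q₂ := by
  rw [DoM_eq_sInf_moveCosts P₁, DoM_eq_sInf_moveCosts P₂,
    ← csInf_add (moveCosts_nonempty hP₁ Q₁) (bddBelow_moveCosts P₁ Q₁)
      (moveCosts_nonempty hP₂ Q₂) (bddBelow_moveCosts P₂ Q₂)]
  refine le_csInf ((moveCosts_nonempty hP₁ Q₁).add (moveCosts_nonempty hP₂ Q₂)) ?_
  rintro _ ⟨_, ⟨f, hf, rfl⟩, _, ⟨g, hg, rfl⟩, rfl⟩
  obtain ⟨h, hh, hcost⟩ := H f g hf hg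
  exact (DoM_le hh).trans hcost

end

theorem stmt5_general {m : ℕ} (A B C : Finset (Pt m))
    (hB : B.Nonempty) :
    DoM A B + DoM B C ≥ DoM A (B ∪ C) ∧ DoM A B + DoM A C ≥ DoM A (B ∪ C) := by
  rcases A.eq_empty_or_nonempty with rfl | hA
  · simp [DoM_nonneg]
  exact ⟨DoM_le_add hA hB fun _ _ => exists_setWDom_union_trans,
    DoM_le_add hA hA fun _ _ => exists_setWDom_union_inf⟩

theorem stmt5 {m : ℕ} (A B C : Finset (Pt m))
    (hA : A.Nonempty) (hB : B.Nonempty) (hC : C.Nonempty) :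
    DoM A B + DoM B C ≥ DoM A (B ∪ C) ∧ DoM A B + DoM A C ≥ DoM A (B ∪ C) :=
  stmt5_general A B C hB
end

section
/- Between-points absorption: let S* be an optimal partition of P to Q with a group (p_s, Q_s), |Q_s| > 1, containing q_{s1}, q_{s2} ∈ Q_s. If a point q_t ∈ Q is weakly dominated by the ideal point of {q_{s1}, q_{s2}} (componentwise minimum), and q_t belongs to another group (p_t, Q_t) of S*, then moving q_t from Q_t to Q_s yields a partition with the same total cost; in particular, the new partition is also optimal. -/
/-! Each coordinate of `q_t` is bounded below by that of `q_{s1}` or of `q_{s2}`, so adding `q_t`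
to `Q_s` leaves every coordinate minimum, hence `d(p_s, Q_s)`, unchanged, while removing it from
`Q_t` can only lower `d(p_t, Q_t)`. The moved partition thus costs at most as much as the optimal
one, hence exactly as much. -/

open Finset

section

variable {m : ℕ}

@[simp]
lemma unionSnd_nil : unionSnd ([] : List (Pt m × Finset (Pt m))) = ∅ := rfl

@[simp]
lemma unionSnd_cons (g : Pt m × Finset (Pt m)) (L : List (Pt m × Finset (Pt m))) :
    unionSnd (g :: L) = g.2 ∪ unionSnd L := rfl

@[simp]
lemma unionSnd_append (L₁ L₂ : List (Pt m × Finset (Pt m))) :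
    unionSnd (L₁ ++ L₂) = unionSnd L₁ ∪ unionSnd L₂ := by
  induction L₁ with
  | nil => simp
  | cons g L ih => simp [ih, Finset.union_assoc]

@[simp]
lemma pcost_cons (g : Pt m × Finset (Pt m)) (L : List (Pt m × Finset (Pt m))) :
    pcost (g :: L) = dCost g.1 g.2 + pcost L := by
  simp [pcost]

@[simp]
lemma pcost_append (L₁ L₂ : List (Pt m × Finset (Pt m))) :
    pcost (L₁ ++ L₂) = pcost L₁ + pcost L₂ := by
  simp [pcost]

lemma IsPartition.move {P Q : Finset (Pt m)} {A B C : List (Pt m × Finset (Pt m))}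
    {p p' q : Pt m} {S T : Finset (Pt m)}
    (hS : IsPartition P Q (A ++ (p, S) :: B ++ (p', T) :: C)) (hq : q ∈ T) :
    IsPartition P Q (A ++ (p, insert q S) :: B ++ (p', T.erase q) :: C) := by
  obtain ⟨hgroups, hcover⟩ := hS
  have hp'T : p' ∈ P ∧ T ⊆ Q := hgroups (p', T) (by simp)
  have hpS : p ∈ P ∧ S ⊆ Q := hgroups (p, S) (by simp)
  refine ⟨fun g hg => ?_, ?_⟩
  · simp only [List.mem_append, List.mem_cons] at hg
    rcases hg with (hA | rfl | hB) | rfl | hC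
    · exact hgroups g (by simp [hA])
    · exact ⟨hpS.1, Finset.insert_subset (hp'T.2 hq) hpS.2⟩
    · exact hgroups g (by simp [hB])
    · exact ⟨hp'T.1, (Finset.erase_subset q T).trans hp'T.2⟩
    · exact hgroups g (by simp [hC])
  · rw [← hcover]
    ext x
    by_cases hx : x = q
    · subst hx; simp [hq]
    · simp [hx]

lemma pcost_le_of_dCost_le {A B C : List (Pt m × Finset (Pt m))} {p p' : Pt m}
    {S S' T T' : Finset (Pt m)} (hS : dCost p S' ≤ dCost p S) (hT : dCost p' T' ≤ dCost p' T) :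
    pcost (A ++ (p, S') :: B ++ (p', T') :: C) ≤ pcost (A ++ (p, S) :: B ++ (p', T) :: C) := by
  simp only [pcost_append, pcost_cons]
  linarith

lemma dCost_mono (p : Pt m) {S T : Finset (Pt m)} (h : S ⊆ T) : dCost p S ≤ dCost p T := by
  refine Finset.sum_le_sum fun j _ => sub_le_sub_left ?_ _
  exact Finset.inf'_mono _ (Finset.insert_subset_insert p h) _

lemma dCost_insert_of_forall_exists_le (p q : Pt m) {S : Finset (Pt m)}
    (h : ∀ j, ∃ s ∈ S, s j ≤ q j) : dCost p (insert q S) = dCost p S := by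
  refine Finset.sum_congr rfl fun j _ => congrArg (p j - ·) ?_
  obtain ⟨s, hs, hsq⟩ := h j
  have hle : (insert p S).inf' (insert_nonempty p S) (fun s => s j) ≤ q j :=
    (Finset.inf'_le _ (Finset.mem_insert_of_mem hs)).trans hsq
  simp only [Finset.insert_comm p q S]
  rw [Finset.inf'_insert (insert_nonempty p S), inf_eq_right.mpr hle]

end

theorem stmt12_general {m : ℕ} (P Q : Finset (Pt m))
    (A B C : List (Pt m × Finset (Pt m)))
    (ps pt : Pt m) (Qs Qt : Finset (Pt m))
    (hS : IsPartition P Q (A ++ (ps, Qs) :: B ++ (pt, Qt) :: C))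
    (hopt : ∀ T, IsPartition P Q T →
      pcost (A ++ (ps, Qs) :: B ++ (pt, Qt) :: C) ≤ pcost T)
    (qs1 qs2 qt : Pt m) (h1 : qs1 ∈ Qs) (h2 : qs2 ∈ Qs)
    (hqt : qt ∈ Qt)
    (hdom : wdom (fun j => min (qs1 j) (qs2 j)) qt) :
    IsPartition P Q (A ++ (ps, insert qt Qs) :: B ++ (pt, Qt.erase qt) :: C) ∧
    pcost (A ++ (ps, insert qt Qs) :: B ++ (pt, Qt.erase qt) :: C)
      = pcost (A ++ (ps, Qs) :: B ++ (pt, Qt) :: C) ∧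
    (∀ T, IsPartition P Q T →
      pcost (A ++ (ps, insert qt Qs) :: B ++ (pt, Qt.erase qt) :: C) ≤ pcost T) := by
  have hpart := hS.move hqt
  have hbelow : ∀ j, ∃ s ∈ Qs, s j ≤ qt j := fun j => by
    rcases min_choice (qs1 j) (qs2 j) with h | h
    · exact ⟨qs1, h1, h ▸ hdom j⟩
    · exact ⟨qs2, h2, h ▸ hdom j⟩
  have hle := pcost_le_of_dCost_le (A := A) (B := B) (C := C)
    (dCost_insert_of_forall_exists_le ps qt hbelow).le (dCost_mono pt (Qt.erase_subset qt))
  have heq := le_antisymm hle (hopt _ hpart)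
  exact ⟨hpart, heq, fun T hT => heq ▸ hopt T hT⟩

theorem stmt12 {m : ℕ} (P Q : Finset (Pt m))
    (A B C : List (Pt m × Finset (Pt m)))
    (ps pt : Pt m) (Qs Qt : Finset (Pt m))
    (hS : IsPartition P Q (A ++ (ps, Qs) :: B ++ (pt, Qt) :: C))
    (hopt : ∀ T, IsPartition P Q T →
      pcost (A ++ (ps, Qs) :: B ++ (pt, Qt) :: C) ≤ pcost T)
    (qs1 qs2 qt : Pt m) (h1 : qs1 ∈ Qs) (h2 : qs2 ∈ Qs) (hcard : 1 < Qs.card)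
    (hqt : qt ∈ Qt)
    (hdom : wdom (fun j => min (qs1 j) (qs2 j)) qt) :
    IsPartition P Q (A ++ (ps, insert qt Qs) :: B ++ (pt, Qt.erase qt) :: C) ∧
    pcost (A ++ (ps, insert qt Qs) :: B ++ (pt, Qt.erase qt) :: C)
      = pcost (A ++ (ps, Qs) :: B ++ (pt, Qt) :: C) ∧
    (∀ T, IsPartition P Q T →
      pcost (A ++ (ps, insert qt Qs) :: B ++ (pt, Qt.erase qt) :: C) ≤ pcost T) :=
  stmt12_general P Q A B C ps pt Qs Qt hS hopt qs1 qs2 qt h1 h2 hqt hdom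
end
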